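/- Let X be a σ-finite measure space and h : X → N(ℝ_d) measurable, where N(ℝ_d) = { s ∈ ℝ_d : s s̄ = s̄ s = |s|² }. Then: (i) M_h is injective if and only if h(x) ≠ 0 for a.e. x, in which case M_h^{-1} = M_{h^{-1}}; (ii) M_h is surjective if and only if there exists ε > 0 with |h(x)| ≥ ε for a.e. x. -/

import Mathlib

/-!
A nonzero `s ∈ N(ℝ_d)` has the two-sided inverse `s̄ / |s|²`, and `|s⁻¹| ≤ C / |s|` because
Clifford conjugation is a bounded operator. This gives the inverse formulas and, when `|h| ≥ ε`
a.e., the bounded preimage `h⁻¹ g`; testing injectivity on the indicator of a set of finite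
positive measure inside `{h = 0}` gives the converse of (i).

For the converse of (ii) only the bound `|ab| ≤ C |a| |b|` for the Clifford product is needed.
If `|h|` is not essentially bounded below, pick sets `Bₙ` of finite positive measure on which
`|h|ᵖ < 4⁻ⁿ`, and let `rᵖ = ∑ₙ 2⁻ⁿ 𝟙_{Bₙ} / μ(Bₙ)`, so that `r ∈ Lᵖ`. Any `f` with `h f = r`
satisfies `|f| ≥ r / (C |h|)`, and `∫ (r / |h|)ᵖ ≥ 2ⁿ` for every `n`, so `f ∉ Lᵖ`.
-/

noncomputable section

open scoped BigOperators

/-- The negative-definite quadratic form on `Fin d → ℝ`, so that the Clifford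
algebra generators satisfy `eᵢ² = -1` and anticommute. -/
def negQ (d : ℕ) : QuadraticForm ℝ (Fin d → ℝ) :=
  QuadraticMap.weightedSumSquares ℝ (fun _ : Fin d => (-1 : ℝ))

/-- The real Clifford algebra ℝ_d. -/
abbrev Cl (d : ℕ) : Type := CliffordAlgebra (negQ d)

/-- The paravector `s₀ + s₁e₁ + ⋯ + s_d e_d`. -/
def pv {d : ℕ} (s₀ : ℝ) (v : Fin d → ℝ) : Cl d :=
  algebraMap ℝ (Cl d) s₀ + CliffordAlgebra.ι (negQ d) v

/-- The Clifford conjugate `s₀ - s₁e₁ - ⋯ - s_d e_d` of a paravector. -/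
def pvConj {d : ℕ} (s₀ : ℝ) (v : Fin d → ℝ) : Cl d :=
  algebraMap ℝ (Cl d) s₀ - CliffordAlgebra.ι (negQ d) v

/-- The squared modulus `s₀² + s₁² + ⋯ + s_d²` of a paravector. -/
def pvNormSq {d : ℕ} (s₀ : ℝ) (v : Fin d → ℝ) : ℝ := s₀ ^ 2 + ∑ i, v i ^ 2

/-- Clifford conjugation on ℝ_d (composite of involution and reversal). -/
def clConj {d : ℕ} (a : Cl d) : Cl d :=
  CliffordAlgebra.reverse (CliffordAlgebra.involute a)

open MeasureTheory

/-- The set `N(ℝ_d) = { s : s s̄ = s̄ s = |s|² }` (with `|s|²` a real scalar),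
relative to the coordinate isomorphism `ℓ` giving the Euclidean norm. -/
def NSet {d : ℕ} (ℓ : Cl d ≃ₗ[ℝ] EuclideanSpace ℝ (Fin (2 ^ d))) : Set (Cl d) :=
  {s | s * clConj s = algebraMap ℝ (Cl d) (‖ℓ s‖ ^ 2) ∧
       clConj s * s = algebraMap ℝ (Cl d) (‖ℓ s‖ ^ 2)}

/-- Pointwise inverse `h⁻¹ = h̄/|h|²` of an `N(ℝ_d)`-valued function. -/
def hInv {d : ℕ} (ℓ : Cl d ≃ₗ[ℝ] EuclideanSpace ℝ (Fin (2 ^ d)))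
    {X : Type*} (h : X → Cl d) (x : X) : Cl d :=
  (‖ℓ (h x)‖ ^ 2)⁻¹ • clConj (h x)

open scoped ENNReal NNReal

namespace LinearEquiv

variable {A E : Type*} [Ring A] [Algebra ℝ A] [NormedAddCommGroup E] [NormedSpace ℝ E]
  [FiniteDimensional ℝ E] (ℓ : A ≃ₗ[ℝ] E)

def mulCLM : E →L[ℝ] E →L[ℝ] E :=
  ((ℓ.arrowCongr (ℓ.arrowCongr ℓ)) (LinearMap.mul ℝ A)).toContinuousBilinearMap

theorem mulCLM_apply (a b : A) : ℓ.mulCLM (ℓ a) (ℓ b) = ℓ (a * b) := by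
  simp [mulCLM]

theorem norm_map_mul_le (a b : A) : ‖ℓ (a * b)‖ ≤ ‖ℓ.mulCLM‖ * ‖ℓ a‖ * ‖ℓ b‖ := by
  simpa only [mulCLM_apply] using ℓ.mulCLM.le_opNorm₂ (ℓ a) (ℓ b)

def conjCLM (T : A →ₗ[ℝ] A) : E →L[ℝ] E :=
  LinearMap.toContinuousLinearMap (ℓ.conj T)

theorem conjCLM_apply (T : A →ₗ[ℝ] A) (a : A) : ℓ.conjCLM T (ℓ a) = ℓ (T a) := by
  simp [conjCLM, conj_apply]

theorem norm_map_apply_le (T : A →ₗ[ℝ] A) (a : A) : ‖ℓ (T a)‖ ≤ ‖ℓ.conjCLM T‖ * ‖ℓ a‖ := by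
  simpa only [conjCLM_apply] using (ℓ.conjCLM T).le_opNorm (ℓ a)

end LinearEquiv

namespace MeasureTheory

variable {X : Type*} [MeasurableSpace X] {μ : Measure X}

theorem NullMeasurableSet.exists_subset_measure_lt_top [SigmaFinite μ] {s : Set X} {r : ℝ≥0∞}
    (hs : NullMeasurableSet s μ) (h's : r < μ s) :
    ∃ t, MeasurableSet t ∧ t ⊆ s ∧ r < μ t ∧ μ t < ∞ := by
  obtain ⟨t, hts, ht, hst⟩ := hs.exists_measurable_subset_ae_eq
  obtain ⟨u, hu, hut, hru, hμu⟩ :=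
    Measure.exists_subset_measure_lt_top ht (measure_congr hst ▸ h's)
  exact ⟨u, hu, hut.trans hts, hru, hμu⟩

theorem exists_lintegral_lt_top_lintegral_div_eq_top [SigmaFinite μ] {ψ : X → ℝ≥0∞}
    (hψ : AEMeasurable ψ μ) (hsmall : ∀ ε : ℝ≥0, 0 < ε → ¬ ∀ᵐ x ∂μ, ε ≤ ψ x) :
    ∃ s : X → ℝ≥0∞, Measurable s ∧ ∫⁻ x, s x ∂μ < ∞ ∧ ∫⁻ x, s x / ψ x ∂μ = ∞ := by
  have hB (n : ℕ) : ∃ B, MeasurableSet B ∧ B ⊆ {x | ψ x < (4 ^ n)⁻¹} ∧ 0 < μ B ∧ μ B < ∞ := by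
    refine (nullMeasurableSet_lt hψ aemeasurable_const).exists_subset_measure_lt_top ?_
    simpa [ae_iff, pos_iff_ne_zero] using hsmall ((4 : ℝ≥0) ^ n)⁻¹ (by positivity)
  choose B hBm hBψ hB0 hBtop using hB
  obtain ⟨w, hwB⟩ : ∃ w : ℕ → ℝ≥0∞, ∀ n, w n * μ (B n) = (2 ^ n)⁻¹ :=
    ⟨fun n => (2 ^ n * μ (B n))⁻¹, fun n => by
      dsimp only
      rw [ENNReal.mul_inv (by simp) (by simp), mul_assoc,
        ENNReal.inv_mul_cancel (hB0 n).ne' (hBtop n).ne, mul_one]⟩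
  have hind (n : ℕ) : Measurable ((B n).indicator fun _ => w n) :=
    measurable_const.indicator (hBm n)
  refine ⟨fun x => ∑' n, (B n).indicator (fun _ => w n) x, Measurable.tsum hind, ?_, ?_⟩
  · rw [lintegral_tsum fun n => (hind n).aemeasurable]
    simp_rw [lintegral_indicator_const (hBm _), hwB, ENNReal.inv_pow, ENNReal.tsum_geometric,
      ENNReal.one_sub_inv_two, inv_inv]
    exact ENNReal.ofNat_lt_top
  · refine top_unique <| le_of_tendsto'
      (ENNReal.tendsto_pow_atTop_nhds_top_iff (r := 2) |>.2 (by norm_num)) fun n => ?_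
    calc (2 : ℝ≥0∞) ^ n = 4 ^ n * (w n * μ (B n)) := by
          rw [hwB, show (4 : ℝ≥0∞) = 2 * 2 by norm_num, mul_pow, mul_assoc,
            ENNReal.mul_inv_cancel (by simp) (by simp), mul_one]
      _ = ∫⁻ x, (B n).indicator (fun _ => 4 ^ n * w n) x ∂μ := by
          rw [lintegral_indicator_const (hBm n), mul_assoc]
      _ ≤ ∫⁻ x, (∑' k, (B k).indicator (fun _ => w k) x) / ψ x ∂μ := lintegral_mono fun x => ?_
    by_cases hx : x ∈ B n
    · have hψx : 4 ^ n < (ψ x)⁻¹ := ENNReal.lt_inv_iff_lt_inv.1 (hBψ n hx)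
      rw [Set.indicator_of_mem hx, div_eq_mul_inv, mul_comm]
      gcongr
      calc w n = (B n).indicator (fun _ => w n) x := (Set.indicator_of_mem hx fun _ => w n).symm
        _ ≤ ∑' k, (B k).indicator (fun _ => w k) x := ENNReal.le_tsum n
    · simp [hx]

theorem exists_memLp_forall_memLp_not_ae_le_mul {E : Type*} [NormedAddCommGroup E]
    [SigmaFinite μ] {p : ℝ≥0∞} (hp0 : p ≠ 0) (hp : p ≠ ∞) {φ : X → ℝ} (hφ : AEMeasurable φ μ)
    (hsmall : ∀ ε : ℝ, 0 < ε → ¬ ∀ᵐ x ∂μ, ε ≤ φ x) :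
    ∃ r : X → ℝ, MemLp r p μ ∧ ∀ F : X → E, MemLp F p μ → ¬ ∀ᵐ x ∂μ, r x ≤ φ x * ‖F x‖ := by
  set q := p.toReal
  have hq : 0 < q := ENNReal.toReal_pos hp0 hp
  have hψ (ε : ℝ≥0) (hε : 0 < ε) : ¬ ∀ᵐ x ∂μ, (ε : ℝ≥0∞) ≤ ENNReal.ofReal (φ x) ^ q := by
    refine fun hle => hsmall ((ε ^ q⁻¹ : ℝ≥0) : ℝ) (by positivity) (hle.mono fun x hx => ?_)
    have := ENNReal.rpow_le_rpow hx (inv_nonneg.2 hq.le)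
    rw [ENNReal.rpow_rpow_inv hq.ne', ← ENNReal.coe_rpow_of_nonneg _ (inv_nonneg.2 hq.le),
      ← ENNReal.ofReal_coe_nnreal, ENNReal.ofReal_le_ofReal_iff'] at this
    exact this.resolve_right (not_le.2 (by positivity))
  obtain ⟨s, hs, hs_int, hs_div⟩ :=
    exists_lintegral_lt_top_lintegral_div_eq_top (hφ.ennreal_ofReal.pow_const q) hψ
  set r : X → ℝ := fun x => (s x ^ q⁻¹).toReal
  have hr : ∀ᵐ x ∂μ, ‖r x‖ₑ ^ q = s x := by
    filter_upwards [ae_lt_top hs hs_int.ne] with x hx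
    rw [Real.enorm_of_nonneg ENNReal.toReal_nonneg,
      ENNReal.ofReal_toReal (ENNReal.rpow_ne_top_of_nonneg (inv_nonneg.2 hq.le) hx.ne),
      ENNReal.rpow_inv_rpow hq.ne']
  refine ⟨r, ⟨(hs.pow_const _).ennreal_toReal.aestronglyMeasurable, ?_⟩, fun F hF hle => ?_⟩
  · rw [eLpNorm_lt_top_iff_lintegral_rpow_enorm_lt_top hp0 hp, lintegral_congr_ae hr]
    exact hs_int
  · have hdom : ∫⁻ x, s x / ENNReal.ofReal (φ x) ^ q ∂μ ≤ ∫⁻ x, ‖F x‖ₑ ^ q ∂μ := by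
      refine lintegral_mono_ae ?_
      filter_upwards [hr, hle] with x hrx hx
      refine ENNReal.div_le_of_le_mul ?_
      rw [← hrx, ← ENNReal.mul_rpow_of_nonneg _ _ hq.le, mul_comm,
        Real.enorm_of_nonneg ENNReal.toReal_nonneg, ← ofReal_norm,
        ← ENNReal.ofReal_mul' (norm_nonneg _)]
      gcongr
    have hF_int := (eLpNorm_lt_top_iff_lintegral_rpow_enorm_lt_top hp0 hp).1 hF.2
    exact hF_int.ne (top_unique (hs_div ▸ hdom))

variable {A E : Type*} [Ring A] [Algebra ℝ A] [NormedAddCommGroup E] [NormedSpace ℝ E]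
  (ℓ : A ≃ₗ[ℝ] E) {p : ℝ≥0∞}

theorem ae_ne_zero_of_mul_injective [Nontrivial A] [SigmaFinite μ] {h : X → A}
    (hmeas : AEStronglyMeasurable (fun x => ℓ (h x)) μ)
    (hinj : ∀ f : X → A, MemLp (fun x => ℓ (f x)) p μ → MemLp (fun x => ℓ (h x * f x)) p μ →
      (fun x => h x * f x) =ᵐ[μ] 0 → f =ᵐ[μ] 0) :
    ∀ᵐ x ∂μ, h x ≠ 0 := by
  by_contra hne
  have hzero : NullMeasurableSet {x | h x = 0} μ := by
    simpa using hmeas.nullMeasurableSet_eq_fun aestronglyMeasurable_const (g := fun _ => 0)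
  obtain ⟨T, hTm, hTsub, hT0, hTtop⟩ :=
    hzero.exists_subset_measure_lt_top (r := 0) (pos_iff_ne_zero.2 (by simpa [ae_iff] using hne))
  set f : X → A := T.indicator fun _ => 1
  have hhf (x : X) : h x * f x = 0 := by
    by_cases hx : x ∈ T
    · simp [f, hx, show h x = 0 from hTsub hx]
    · simp [f, hx]
  have hf : MemLp (fun x => ℓ (f x)) p μ := by
    have : (fun x => ℓ (f x)) = T.indicator fun _ => ℓ 1 := funext fun x => by
      by_cases hx : x ∈ T <;> simp [f, hx]
    exact this ▸ memLp_indicator_const p hTm _ (Or.inr hTtop.ne)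
  have hf0 := hinj f hf (by simp [hhf]) (.of_forall hhf)
  refine hT0.ne' (measure_mono_null (fun x hx => ?_) (ae_iff.1 hf0))
  simp [f, hx]

variable [FiniteDimensional ℝ E]

theorem AEStronglyMeasurable.map_mul {f g : X → A}
    (hf : AEStronglyMeasurable (fun x => ℓ (f x)) μ)
    (hg : AEStronglyMeasurable (fun x => ℓ (g x)) μ) :
    AEStronglyMeasurable (fun x => ℓ (f x * g x)) μ := by
  simpa only [ℓ.mulCLM_apply] using ℓ.mulCLM.aestronglyMeasurable_comp₂ hf hg

theorem MemLp.map_mul_of_ae_norm_le {f g : X → A} {C : ℝ}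
    (hg : MemLp (fun x => ℓ (g x)) p μ) (hf : AEStronglyMeasurable (fun x => ℓ (f x)) μ)
    (hC : ∀ᵐ x ∂μ, ‖ℓ (f x)‖ ≤ C) : MemLp (fun x => ℓ (f x * g x)) p μ := by
  refine hg.of_le_mul (c := ‖ℓ.mulCLM‖ * C) (hf.map_mul ℓ hg.1) ?_
  filter_upwards [hC] with x hx
  calc ‖ℓ (f x * g x)‖ ≤ ‖ℓ.mulCLM‖ * ‖ℓ (f x)‖ * ‖ℓ (g x)‖ := ℓ.norm_map_mul_le _ _
    _ ≤ ‖ℓ.mulCLM‖ * C * ‖ℓ (g x)‖ := by gcongr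

theorem exists_pos_ae_le_norm_of_mul_surjective [Nontrivial A] [SigmaFinite μ] (hp0 : p ≠ 0)
    (hp : p ≠ ∞) {h : X → A} (hmeas : AEStronglyMeasurable (fun x => ℓ (h x)) μ)
    (hsurj : ∀ g : X → A, MemLp (fun x => ℓ (g x)) p μ →
      ∃ f : X → A, MemLp (fun x => ℓ (f x)) p μ ∧ MemLp (fun x => ℓ (h x * f x)) p μ ∧
        (fun x => h x * f x) =ᵐ[μ] g) :
    ∃ ε : ℝ, 0 < ε ∧ ∀ᵐ x ∂μ, ε ≤ ‖ℓ (h x)‖ := by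
  by_contra hsmall
  simp only [not_exists, not_and] at hsmall
  obtain ⟨r, hr, hr_not⟩ :=
    exists_memLp_forall_memLp_not_ae_le_mul (E := E) hp0 hp hmeas.norm.aemeasurable hsmall
  have hg : MemLp (fun x => ℓ (r x • (1 : A))) p μ := by
    simp only [map_smul]
    exact (memLp_top_const (ℓ 1)).smul hr
  obtain ⟨f, hf, -, hfg⟩ := hsurj _ hg
  have hℓ1 : 0 < ‖ℓ 1‖ := by simp
  set M := ‖ℓ.mulCLM‖ / ‖ℓ 1‖
  refine hr_not (fun x => M • ℓ (f x)) (hf.const_smul M) ?_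
  filter_upwards [hfg] with x hx
  have hbound := ℓ.norm_map_mul_le (h x) (f x)
  rw [hx, map_smul, norm_smul, Real.norm_eq_abs] at hbound
  rw [norm_smul, Real.norm_of_nonneg (by positivity)]
  calc r x ≤ |r x| := le_abs_self _
    _ ≤ ‖ℓ (h x)‖ * (M * ‖ℓ (f x)‖) := by
      rw [← mul_le_mul_iff_left₀ hℓ1]
      simp only [M]
      field_simp
      linarith

end MeasureTheory

section Clifford

variable {d : ℕ} (ℓ : Cl d ≃ₗ[ℝ] EuclideanSpace ℝ (Fin (2 ^ d)))

def clConjₗ (d : ℕ) : Cl d →ₗ[ℝ] Cl d :=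
  CliffordAlgebra.reverse.comp (CliffordAlgebra.involute (Q := negQ d)).toLinearMap

theorem clConjₗ_apply (a : Cl d) : clConjₗ d a = clConj a := rfl

variable {X : Type*} {h : X → Cl d}

theorem hInv_mul_self {x : X} (hN : h x ∈ NSet ℓ) (h0 : h x ≠ 0) : hInv ℓ h x * h x = 1 := by
  have : ‖ℓ (h x)‖ ^ 2 ≠ 0 := pow_ne_zero 2 (norm_ne_zero_iff.2 (ℓ.map_ne_zero_iff.2 h0))
  rw [hInv, smul_mul_assoc, hN.2, Algebra.smul_def, ← map_mul, inv_mul_cancel₀ this, map_one]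

theorem mul_hInv_self {x : X} (hN : h x ∈ NSet ℓ) (h0 : h x ≠ 0) : h x * hInv ℓ h x = 1 := by
  have : ‖ℓ (h x)‖ ^ 2 ≠ 0 := pow_ne_zero 2 (norm_ne_zero_iff.2 (ℓ.map_ne_zero_iff.2 h0))
  rw [hInv, mul_smul_comm, hN.1, Algebra.smul_def, ← map_mul, inv_mul_cancel₀ this, map_one]

-- Also where `h x = 0`: there both sides vanish, as `0⁻¹ = 0` and `a / 0 = 0`.
theorem norm_hInv_le (x : X) :
    ‖ℓ (hInv ℓ h x)‖ ≤ ‖ℓ.conjCLM (clConjₗ d)‖ / ‖ℓ (h x)‖ := by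
  rw [hInv, map_smul, norm_smul, Real.norm_of_nonneg (by positivity)]
  calc (‖ℓ (h x)‖ ^ 2)⁻¹ * ‖ℓ (clConj (h x))‖
      ≤ (‖ℓ (h x)‖ ^ 2)⁻¹ * (‖ℓ.conjCLM (clConjₗ d)‖ * ‖ℓ (h x)‖) := by
        gcongr
        exact ℓ.norm_map_apply_le (clConjₗ d) (h x)
    _ = ‖ℓ.conjCLM (clConjₗ d)‖ / ‖ℓ (h x)‖ := by
        rcases eq_or_ne ‖ℓ (h x)‖ 0 with h0 | h0
        · simp [h0]
        · field_simp

variable [MeasurableSpace X] {μ : Measure X}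

theorem aestronglyMeasurable_hInv (hmeas : AEStronglyMeasurable (fun x => ℓ (h x)) μ) :
    AEStronglyMeasurable (fun x => ℓ (hInv ℓ h x)) μ := by
  have : (fun x => ℓ (hInv ℓ h x)) =
      fun x => (‖ℓ (h x)‖ ^ 2)⁻¹ • ℓ.conjCLM (clConjₗ d) (ℓ (h x)) := by
    funext x
    rw [hInv, map_smul, ℓ.conjCLM_apply, clConjₗ_apply]
  rw [this]
  exact (hmeas.norm.aemeasurable.pow_const 2).inv.aestronglyMeasurable.smul
    ((ℓ.conjCLM _).continuous.comp_aestronglyMeasurable hmeas)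

theorem hInv_mul_mul_ae_eq (hN : ∀ x, h x ∈ NSet ℓ) (hae : ∀ᵐ x ∂μ, h x ≠ 0) (f : X → Cl d) :
    (fun x => hInv ℓ h x * (h x * f x)) =ᵐ[μ] f := by
  filter_upwards [hae] with x hx
  rw [← mul_assoc, hInv_mul_self ℓ (hN x) hx, one_mul]

theorem mul_hInv_mul_ae_eq (hN : ∀ x, h x ∈ NSet ℓ) (hae : ∀ᵐ x ∂μ, h x ≠ 0) (g : X → Cl d) :
    (fun x => h x * (hInv ℓ h x * g x)) =ᵐ[μ] g := by
  filter_upwards [hae] with x hx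
  rw [← mul_assoc, mul_hInv_self ℓ (hN x) hx, one_mul]

end Clifford

/-- for σ-finite `X` and `h : X → N(ℝ_d)` measurable:
(i) `M_h` is injective iff `h ≠ 0` a.e., in which case `M_h⁻¹ = M_{h⁻¹}`;
(ii) `M_h` is surjective iff `∃ ε > 0` with `|h| ≥ ε` a.e. -/
theorem multiplication_operator_injective_surjective {d : ℕ}
    {X : Type*} [MeasurableSpace X] (μ : Measure X) [SigmaFinite μ]
    (ℓ : Cl d ≃ₗ[ℝ] EuclideanSpace ℝ (Fin (2 ^ d)))
    (h : X → Cl d) (hmeas : AEStronglyMeasurable (fun x => ℓ (h x)) μ)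
    (hN : ∀ x : X, h x ∈ NSet ℓ) :
    -- (i) injectivity criterion:
    (((∀ f : X → Cl d, MemLp (fun x => ℓ (f x)) 2 μ →
        MemLp (fun x => ℓ (h x * f x)) 2 μ →
        (fun x => h x * f x) =ᵐ[μ] 0 → f =ᵐ[μ] 0)) ↔ (∀ᵐ x ∂μ, h x ≠ 0)) ∧
    -- in the injective case the inverse is `M_{h⁻¹}`:
    ((∀ᵐ x ∂μ, h x ≠ 0) →
      (∀ f : X → Cl d, MemLp (fun x => ℓ (f x)) 2 μ →
        MemLp (fun x => ℓ (h x * f x)) 2 μ →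
        (fun x => hInv ℓ h x * (h x * f x)) =ᵐ[μ] f) ∧
      (∀ g : X → Cl d, MemLp (fun x => ℓ (g x)) 2 μ →
        MemLp (fun x => ℓ (hInv ℓ h x * g x)) 2 μ →
        (fun x => h x * (hInv ℓ h x * g x)) =ᵐ[μ] g)) ∧
    -- (ii) surjectivity criterion:
    ((∀ g : X → Cl d, MemLp (fun x => ℓ (g x)) 2 μ →
        ∃ f : X → Cl d, MemLp (fun x => ℓ (f x)) 2 μ ∧
          MemLp (fun x => ℓ (h x * f x)) 2 μ ∧
          (fun x => h x * f x) =ᵐ[μ] g) ↔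
      ∃ ε : ℝ, 0 < ε ∧ ∀ᵐ x ∂μ, ε ≤ ‖ℓ (h x)‖) := by
  refine ⟨⟨ae_ne_zero_of_mul_injective ℓ hmeas, fun hae f _ _ hf0 => ?_⟩,
    fun hae => ⟨fun f _ _ => hInv_mul_mul_ae_eq ℓ hN hae f,
      fun g _ _ => mul_hInv_mul_ae_eq ℓ hN hae g⟩,
    exists_pos_ae_le_norm_of_mul_surjective ℓ two_ne_zero ENNReal.ofNat_ne_top hmeas, ?_⟩
  · filter_upwards [hInv_mul_mul_ae_eq ℓ hN hae f, hf0] with x hx hx0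
    rw [← hx, hx0, Pi.zero_apply, mul_zero]
  · rintro ⟨ε, hε, hlow⟩ g hg
    have hae : ∀ᵐ x ∂μ, h x ≠ 0 := hlow.mono fun x hx h0 => by simp [h0] at hx; linarith
    have hbound : ∀ᵐ x ∂μ, ‖ℓ (hInv ℓ h x)‖ ≤ ‖ℓ.conjCLM (clConjₗ d)‖ / ε :=
      hlow.mono fun x hx => (norm_hInv_le ℓ x).trans (by gcongr)
    have hfg := mul_hInv_mul_ae_eq ℓ hN hae g
    exact ⟨_, hg.map_mul_of_ae_norm_le ℓ (aestronglyMeasurable_hInv ℓ hmeas) hbound,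
      hg.ae_eq (hfg.fun_comp ℓ).symm, hfg⟩
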